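/- Let (V₁, ⟨·,·⟩_h, V₂, B) be a step-two Carnot datum with dim V₁ = m and let g be any inner product on V₂. Then for every (x,t) ∈ V₁ × V₂ with (x,t) ≠ (0,0), | ‖x‖_h²/N_g(x,t)² − (‖x‖_h⁶ + 16‖J^g_t x‖_h²)/N_g(x,t)⁶ | ≤ √m · δ(g). (The quantity (‖x‖_h⁶ + 16‖J^g_t x‖_h²)/N_g⁶ is the squared horizontal gradient ‖∇₀N_g‖_h² of the Kaplan quasinorm on the associated group.) -/

import Mathlib

open scoped RealInnerProductSpace

noncomputable section

variable {V₁ : Type*} [NormedAddCommGroup V₁] [InnerProductSpace ℝ V₁] [FiniteDimensional ℝ V₁]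
variable {V₂ : Type*} [AddCommGroup V₂] [Module ℝ V₂] [FiniteDimensional ℝ V₂]

/-- `g` is an inner product (symmetric positive-definite bilinear form) on `V₂`. -/
structure IsInnerProd (g : V₂ →ₗ[ℝ] V₂ →ₗ[ℝ] ℝ) : Prop where
  symm : ∀ s t : V₂, g s t = g t s
  posdef : ∀ t : V₂, t ≠ 0 → 0 < g t t

/-- The norm `‖t‖_g = √(g t t)` associated to a vertical inner product `g`. -/
def gnorm (g : V₂ →ₗ[ℝ] V₂ →ₗ[ℝ] ℝ) (t : V₂) : ℝ := Real.sqrt (g t t)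

/-- The Hilbert–Schmidt norm `‖F‖_HS = √(trace(F* F))` of an endomorphism of the
inner product space `V₁`. -/
def hsNorm (F : V₁ →ₗ[ℝ] V₁) : ℝ :=
  Real.sqrt (LinearMap.trace ℝ V₁ (LinearMap.adjoint F ∘ₗ F))

/-- `J` is the J-operator of the bracket `B` with respect to the vertical inner product `g`:
`⟨J_T U, V⟩_h = g(B(U,V), T)` for all `U V : V₁`, `T : V₂`. -/
def IsJOp (B : V₁ →ₗ[ℝ] V₁ →ₗ[ℝ] V₂) (g : V₂ →ₗ[ℝ] V₂ →ₗ[ℝ] ℝ)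
    (J : V₂ → V₁ →ₗ[ℝ] V₁) : Prop :=
  ∀ (T : V₂) (U V : V₁), ⟪J T U, V⟫ = g (B U V) T

/-- The H-type deviation relative to a fixed vertical inner product `g` with J-operator `J`:
`δ(g) = (dim V₁)^{-1/2} sup { ‖(J_T)² + id‖_HS : ‖T‖_g = 1 }`. -/
def deltaOf (g : V₂ →ₗ[ℝ] V₂ →ₗ[ℝ] ℝ) (J : V₂ → V₁ →ₗ[ℝ] V₁) : ℝ :=
  (Real.sqrt (Module.finrank ℝ V₁))⁻¹ *
    sSup ((fun T => hsNorm (J T ∘ₗ J T + LinearMap.id)) '' {T : V₂ | gnorm g T = 1})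

/-- The H-type deviation of a step-two Carnot datum: the infimum of `δ(g)` over all vertical
inner products `g` on `V₂`. -/
def htypeDeviation (B : V₁ →ₗ[ℝ] V₁ →ₗ[ℝ] V₂) : ℝ :=
  sInf { d : ℝ | ∃ (g : V₂ →ₗ[ℝ] V₂ →ₗ[ℝ] ℝ) (J : V₂ → V₁ →ₗ[ℝ] V₁),
    IsInnerProd g ∧ IsJOp B g J ∧ d = deltaOf g J }

end

/-! Since `J_t` is skew, `‖J_t x‖² = -⟪J_t² x, x⟫`, so the defect equals
`16 (‖t‖² ‖x‖² - ‖J_t x‖²) / N⁶ = 16 ‖t‖² ⟪(J_T² + id) x, x⟫ / N⁶` with `T = t / ‖t‖`.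
The inner product is at most `‖J_T² + id‖_HS ‖x‖²`, and `16 ‖t‖² ‖x‖² ≤ N⁴ N² = N⁶`. -/

open scoped RealInnerProductSpace

section HilbertSchmidt

variable {V₁ : Type*} [NormedAddCommGroup V₁] [InnerProductSpace ℝ V₁] [FiniteDimensional ℝ V₁]

theorem hsNorm_eq_sqrt_sum {ι : Type*} [Fintype ι] (b : OrthonormalBasis ι ℝ V₁)
    (F : V₁ →ₗ[ℝ] V₁) : hsNorm F = √(∑ i, ‖F (b i)‖ ^ 2) := by
  classical
  rw [hsNorm, LinearMap.trace_eq_matrix_trace ℝ b.toBasis, Matrix.trace]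
  congr 1
  refine Finset.sum_congr rfl fun i _ => ?_
  rw [Matrix.diag_apply, LinearMap.toMatrix_apply, OrthonormalBasis.coe_toBasis,
    OrthonormalBasis.coe_toBasis_repr_apply, OrthonormalBasis.repr_apply_apply,
    LinearMap.comp_apply, LinearMap.adjoint_inner_right, real_inner_self_eq_norm_sq]

theorem norm_apply_le_hsNorm_mul (F : V₁ →ₗ[ℝ] V₁) (x : V₁) : ‖F x‖ ≤ hsNorm F * ‖x‖ := by
  set b := stdOrthonormalBasis ℝ V₁
  calc ‖F x‖ = ‖∑ i, ⟪b i, x⟫ • F (b i)‖ := by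
        conv_lhs => rw [← b.sum_repr' x]
        simp only [map_sum, map_smul]
    _ ≤ ∑ i, |⟪b i, x⟫| * ‖F (b i)‖ := by
        refine (norm_sum_le _ _).trans_eq ?_
        simp only [norm_smul, Real.norm_eq_abs]
    _ ≤ √(∑ i, |⟪b i, x⟫| ^ 2) * √(∑ i, ‖F (b i)‖ ^ 2) := Real.sum_mul_le_sqrt_mul_sqrt _ _ _
    _ = hsNorm F * ‖x‖ := by
        simp only [sq_abs, b.sum_sq_inner_right, Real.sqrt_sq (norm_nonneg x),
          hsNorm_eq_sqrt_sum b, mul_comm]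

theorem abs_inner_apply_self_le_hsNorm (F : V₁ →ₗ[ℝ] V₁) (x : V₁) :
    |⟪F x, x⟫| ≤ hsNorm F * ‖x‖ ^ 2 :=
  calc |⟪F x, x⟫| ≤ ‖F x‖ * ‖x‖ := abs_real_inner_le_norm _ _
    _ ≤ hsNorm F * ‖x‖ * ‖x‖ := by gcongr; exact norm_apply_le_hsNorm_mul F x
    _ = hsNorm F * ‖x‖ ^ 2 := by ring

theorem continuous_hsNorm : Continuous fun F : V₁ →L[ℝ] V₁ => hsNorm (F : V₁ →ₗ[ℝ] V₁) := by
  simp only [hsNorm_eq_sqrt_sum (stdOrthonormalBasis ℝ V₁), ContinuousLinearMap.coe_coe]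
  fun_prop

end HilbertSchmidt

section Vertical

variable {V₂ : Type*} [AddCommGroup V₂] [Module ℝ V₂] {g : V₂ →ₗ[ℝ] V₂ →ₗ[ℝ] ℝ}

theorem gnorm_smul (c : ℝ) (t : V₂) : gnorm g (c • t) = |c| * gnorm g t := by
  have h : g (c • t) (c • t) = c ^ 2 * g t t := by
    simp only [map_smul, LinearMap.smul_apply, smul_eq_mul]; ring
  rw [gnorm, gnorm, h, Real.sqrt_mul (sq_nonneg c), Real.sqrt_sq_eq_abs]

theorem gnorm_zero : gnorm g (0 : V₂) = 0 := by simp [gnorm]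

theorem IsInnerProd.gnorm_pos (hg : IsInnerProd g) {t : V₂} (ht : t ≠ 0) : 0 < gnorm g t :=
  Real.sqrt_pos.mpr (hg.posdef t ht)

abbrev IsInnerProd.core (hg : IsInnerProd g) : InnerProductSpace.Core ℝ V₂ where
  inner s t := g s t
  conj_inner_symm s t := hg.symm t s
  re_inner_nonneg t := by
    rcases eq_or_ne t 0 with rfl | ht
    · simp
    · exact (hg.posdef t ht).le
  add_left s t u := by simp
  smul_left s t c := by simp
  definite t ht := by_contra fun h => (hg.posdef t h).ne' ht

theorem IsInnerProd.bddAbove_image_sphere [FiniteDimensional ℝ V₂] (hg : IsInnerProd g)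
    {W : Type*} [NormedAddCommGroup W] [NormedSpace ℝ W] (L : V₂ →ₗ[ℝ] W) {φ : W → ℝ}
    (hφ : Continuous φ) : BddAbove ((fun T => φ (L T)) '' {T | gnorm g T = 1}) := by
  let : NormedAddCommGroup V₂ := hg.core.toNormedAddCommGroup
  let : InnerProductSpace ℝ V₂ := .ofCore hg.core.toCore
  have hsphere : {T : V₂ | gnorm g T = 1} = Metric.sphere 0 1 := by
    ext T
    rw [mem_sphere_zero_iff_norm, norm_eq_sqrt_real_inner]
    rfl
  rw [hsphere]
  exact ((isCompact_sphere 0 1).image (hφ.comp L.continuous_of_finiteDimensional)).bddAbove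

end Vertical

section JOperator

variable {V₁ : Type*} [NormedAddCommGroup V₁] [InnerProductSpace ℝ V₁]
  {V₂ : Type*} [AddCommGroup V₂] [Module ℝ V₂] {B : V₁ →ₗ[ℝ] V₁ →ₗ[ℝ] V₂}
  {g : V₂ →ₗ[ℝ] V₂ →ₗ[ℝ] ℝ} {J : V₂ → V₁ →ₗ[ℝ] V₁}

def IsJOp.toLinearMap (hJ : IsJOp B g J) : V₂ →ₗ[ℝ] V₁ →ₗ[ℝ] V₁ where
  toFun := J
  map_add' s t := by
    ext u
    refine ext_inner_right ℝ fun v => ?_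
    rw [LinearMap.add_apply, inner_add_left, hJ, hJ, hJ, map_add]
  map_smul' c t := by
    ext u
    refine ext_inner_right ℝ fun v => ?_
    rw [LinearMap.smul_apply, real_inner_smul_left, hJ, hJ, map_smul, smul_eq_mul, RingHom.id_apply]

theorem IsJOp.inner_apply_apply_self (hB : B.IsAlt) (hJ : IsJOp B g J)
    (T : V₂) (x : V₁) : ⟪J T (J T x), x⟫ = -‖J T x‖ ^ 2 := by
  rw [← real_inner_self_eq_norm_sq, hJ, hJ, ← LinearMap.neg_apply, ← map_neg, hB.neg]

theorem IsJOp.norm_sq_sub_norm_sq_apply (hB : B.IsAlt) (hJ : IsJOp B g J) (T : V₂) (x : V₁) :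
    ‖x‖ ^ 2 - ‖J T x‖ ^ 2 = ⟪(J T ∘ₗ J T + LinearMap.id : V₁ →ₗ[ℝ] V₁) x, x⟫ := by
  rw [LinearMap.add_apply, inner_add_left, LinearMap.comp_apply, hJ.inner_apply_apply_self hB,
    LinearMap.id_apply, real_inner_self_eq_norm_sq]
  ring

noncomputable def hsDeviation [FiniteDimensional ℝ V₁] (g : V₂ →ₗ[ℝ] V₂ →ₗ[ℝ] ℝ)
    (J : V₂ → V₁ →ₗ[ℝ] V₁) : ℝ :=
  sSup ((fun T => hsNorm (J T ∘ₗ J T + LinearMap.id)) '' {T : V₂ | gnorm g T = 1})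

theorem sqrt_finrank_mul_deltaOf [FiniteDimensional ℝ V₁] (h : Module.finrank ℝ V₁ ≠ 0) :
    √(Module.finrank ℝ V₁) * deltaOf g J = hsDeviation g J := by
  rw [deltaOf, ← mul_assoc, mul_inv_cancel₀ (by positivity), one_mul, hsDeviation]

theorem hsDeviation_nonneg [FiniteDimensional ℝ V₁] : 0 ≤ hsDeviation g J :=
  Real.sSup_nonneg <| Set.forall_mem_image.mpr fun _ _ => Real.sqrt_nonneg _

theorem IsJOp.hsNorm_le_hsDeviation [FiniteDimensional ℝ V₁] [FiniteDimensional ℝ V₂]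
    (hg : IsInnerProd g) (hJ : IsJOp B g J) {T : V₂} (hT : gnorm g T = 1) :
    hsNorm (J T ∘ₗ J T + LinearMap.id) ≤ hsDeviation g J := by
  have hφ : Continuous fun F : V₁ →L[ℝ] V₁ =>
      hsNorm ((F ∘L F + .id ℝ V₁ : V₁ →L[ℝ] V₁) : V₁ →ₗ[ℝ] V₁) :=
    continuous_hsNorm.comp ((continuous_id.clm_comp continuous_id).add continuous_const)
  have hbdd :=
    hg.bddAbove_image_sphere (LinearMap.toContinuousLinearMap.toLinearMap ∘ₗ hJ.toLinearMap) hφ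
  exact le_csSup hbdd ⟨T, hT, rfl⟩

theorem IsJOp.abs_sq_mul_sub_norm_sq_le [FiniteDimensional ℝ V₁] [FiniteDimensional ℝ V₂]
    (hg : IsInnerProd g) (hB : B.IsAlt) (hJ : IsJOp B g J) (t : V₂) (x : V₁) :
    |gnorm g t ^ 2 * ‖x‖ ^ 2 - ‖J t x‖ ^ 2| ≤ gnorm g t ^ 2 * hsDeviation g J * ‖x‖ ^ 2 := by
  rcases eq_or_ne t 0 with rfl | ht
  · simp [gnorm_zero, show J 0 = 0 from hJ.toLinearMap.map_zero]
  set γ := gnorm g t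
  have hγ : 0 < γ := hg.gnorm_pos ht
  set T := γ⁻¹ • t
  have hT : gnorm g T = 1 := by rw [gnorm_smul, abs_inv, abs_of_pos hγ, inv_mul_cancel₀ hγ.ne']
  have hJt : J t x = γ • J T x := by
    rw [show J T = γ⁻¹ • J t from hJ.toLinearMap.map_smul γ⁻¹ t, LinearMap.smul_apply, smul_smul,
      mul_inv_cancel₀ hγ.ne', one_smul]
  have hdefect : γ ^ 2 * ‖x‖ ^ 2 - ‖J t x‖ ^ 2 = γ ^ 2 * (‖x‖ ^ 2 - ‖J T x‖ ^ 2) := by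
    rw [hJt, norm_smul, Real.norm_of_nonneg hγ.le]
    ring
  calc |γ ^ 2 * ‖x‖ ^ 2 - ‖J t x‖ ^ 2|
      = γ ^ 2 * |⟪(J T ∘ₗ J T + LinearMap.id : V₁ →ₗ[ℝ] V₁) x, x⟫| := by
        rw [hdefect, hJ.norm_sq_sub_norm_sq_apply hB, abs_mul, abs_sq]
    _ ≤ γ ^ 2 * (hsNorm (J T ∘ₗ J T + LinearMap.id) * ‖x‖ ^ 2) := by
        gcongr; exact abs_inner_apply_self_le_hsNorm _ x
    _ ≤ γ ^ 2 * hsDeviation g J * ‖x‖ ^ 2 := by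
        rw [← mul_assoc]; gcongr; exact hJ.hsNorm_le_hsDeviation hg hT

end JOperator

theorem abs_eikonal_defect_le {a γ j N S : ℝ} (hN : 0 < N) (hN4 : N ^ 4 = a ^ 4 + 16 * γ ^ 2)
    (hS : 0 ≤ S) (h : |γ ^ 2 * a ^ 2 - j ^ 2| ≤ γ ^ 2 * S * a ^ 2) :
    |a ^ 2 / N ^ 2 - (a ^ 6 + 16 * j ^ 2) / N ^ 6| ≤ S := by
  have hdefect : a ^ 2 / N ^ 2 - (a ^ 6 + 16 * j ^ 2) / N ^ 6
      = 16 * (γ ^ 2 * a ^ 2 - j ^ 2) / N ^ 6 := by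
    field_simp
    linear_combination a ^ 2 * hN4
  have ha : a ^ 2 ≤ N ^ 2 := by nlinarith [sq_nonneg γ, sq_nonneg a, sq_nonneg N]
  have hN6 : 16 * γ ^ 2 * a ^ 2 ≤ N ^ 6 := by
    calc 16 * γ ^ 2 * a ^ 2 ≤ N ^ 4 * N ^ 2 := by
          gcongr
          nlinarith [pow_nonneg (sq_nonneg a) 2]
      _ = N ^ 6 := by ring
  rw [hdefect, abs_div, abs_mul, abs_of_pos (by positivity : (0 : ℝ) < N ^ 6), abs_of_pos
    (by norm_num : (0 : ℝ) < 16), div_le_iff₀ (by positivity)]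
  nlinarith

theorem eikonal_defect_le_deviation_general
    {V₁ : Type*} [NormedAddCommGroup V₁] [InnerProductSpace ℝ V₁] [FiniteDimensional ℝ V₁]
    {V₂ : Type*} [AddCommGroup V₂] [Module ℝ V₂] [FiniteDimensional ℝ V₂]
    (m : ℕ) (hm : 1 ≤ m) (hdim₁ : Module.finrank ℝ V₁ = m)
    (B : V₁ →ₗ[ℝ] V₁ →ₗ[ℝ] V₂)
    (hAlt : ∀ U : V₁, B U U = 0)
    (g : V₂ →ₗ[ℝ] V₂ →ₗ[ℝ] ℝ) (hg : IsInnerProd g)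
    (J : V₂ → V₁ →ₗ[ℝ] V₁) (hJ : IsJOp B g J)
    (N : V₁ → V₂ → ℝ)
    (hN : ∀ (x : V₁) (t : V₂), N x t = (‖x‖ ^ 4 + 16 * gnorm g t ^ 2) ^ ((1 : ℝ) / 4)) :
    ∀ (x : V₁) (t : V₂), ¬(x = 0 ∧ t = 0) →
      |‖x‖ ^ 2 / N x t ^ 2 - (‖x‖ ^ 6 + 16 * ‖J t x‖ ^ 2) / N x t ^ 6|
        ≤ Real.sqrt m * deltaOf g J := by
  intro x t hxt
  have hA : 0 < ‖x‖ ^ 4 + 16 * gnorm g t ^ 2 := by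
    rcases not_and_or.mp hxt with hx | ht
    · have := norm_pos_iff.mpr hx
      positivity
    · have := hg.gnorm_pos ht
      positivity
  have hN4 : N x t ^ 4 = ‖x‖ ^ 4 + 16 * gnorm g t ^ 2 := by
    rw [hN, one_div]
    exact_mod_cast Real.rpow_inv_natCast_pow hA.le (n := 4) four_ne_zero
  rw [← hdim₁, sqrt_finrank_mul_deltaOf (by omega)]
  exact abs_eikonal_defect_le (by rw [hN]; exact Real.rpow_pos_of_pos hA _) hN4
    hsDeviation_nonneg (hJ.abs_sq_mul_sub_norm_sq_le hg hAlt t x)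

/-- Stability estimate for the eikonal identity of the Kaplan quasinorm, in terms of the
H-type deviation: for every `(x,t) ≠ (0,0)`,
`| ‖x‖²/N² − (‖x‖⁶ + 16 ‖J_t x‖²)/N⁶ | ≤ √m · δ(g)`, where
`N = N_g(x,t) = (‖x‖⁴ + 16 ‖t‖_g²)^{1/4}`. -/
theorem eikonal_defect_le_deviation
    {V₁ : Type*} [NormedAddCommGroup V₁] [InnerProductSpace ℝ V₁] [FiniteDimensional ℝ V₁]
    {V₂ : Type*} [AddCommGroup V₂] [Module ℝ V₂] [FiniteDimensional ℝ V₂]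
    (m : ℕ) (hm : 1 ≤ m) (hdim₁ : Module.finrank ℝ V₁ = m)
    (hdim₂ : 1 ≤ Module.finrank ℝ V₂)
    (B : V₁ →ₗ[ℝ] V₁ →ₗ[ℝ] V₂)
    (hAlt : ∀ U : V₁, B U U = 0)
    (hSpan : Submodule.span ℝ {t : V₂ | ∃ U V : V₁, B U V = t} = ⊤)
    (g : V₂ →ₗ[ℝ] V₂ →ₗ[ℝ] ℝ) (hg : IsInnerProd g)
    (J : V₂ → V₁ →ₗ[ℝ] V₁) (hJ : IsJOp B g J)
    (N : V₁ → V₂ → ℝ)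
    (hN : ∀ (x : V₁) (t : V₂), N x t = (‖x‖ ^ 4 + 16 * gnorm g t ^ 2) ^ ((1 : ℝ) / 4)) :
    ∀ (x : V₁) (t : V₂), ¬(x = 0 ∧ t = 0) →
      |‖x‖ ^ 2 / N x t ^ 2 - (‖x‖ ^ 6 + 16 * ‖J t x‖ ^ 2) / N x t ^ 6|
        ≤ Real.sqrt m * deltaOf g J :=
  eikonal_defect_le_deviation_general m hm hdim₁ B hAlt g hg J hJ N hN
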